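/- Lower-bound-preserving property of the convexification (Theorem 5.7): Assume uniform SOSC with constant γ > 0, let δ ∈ (0, γ), and suppose Υ̃ > 0 is such that ‖S̃_k(δ)‖ ≤ Υ̃ for all k = 0,…,N−1. Then H̃_k(δ) ⪰ λ_H I for all k = 0,…,N, where λ_H = (γ/(γ+Υ̃))² · δ > 0. -/

import Mathlib

/-!
Backward induction gives `R̃_k(δ) ⪰ γ I` for every `k < N`: apply the control `q₀` at time `k` to a
trajectory that is zero up to `k` and follows `q_j = -R̃_j⁻¹ S̃_j p_j` afterwards. The recursion
telescopes its cost to `q₀ᵀ R̃_k q₀ + δ ∑_j ‖p_j‖²`, and SOSC with `δ < γ` leaves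
`q₀ᵀ R̃_k q₀ ≥ γ ‖q₀‖²`. Then, for `z = (x, y)`, completing the square gives
`zᵀ H̃_k z = wᵀ R̃_k w + δ ‖x‖²` with `w = y + R̃_k⁻¹ S̃_k x`, where `γ ‖R̃_k⁻¹ S̃_k x‖ ≤ Υ̃ ‖x‖`;
a convexity estimate bounds this below by `(γ / (γ + Υ̃))² δ ‖z‖²`.
-/

open Matrix BigOperators Finset

/-- The spectral (operator) norm of a real matrix. -/
noncomputable def opNorm {m n : Type*} [Fintype m] [Fintype n] [DecidableEq n]
    (A : Matrix m n ℝ) : ℝ :=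
  ‖LinearMap.toContinuousLinearMap (Matrix.toEuclideanLin A)‖

/-- The Euclidean norm of a vector in `ℝ^n`. -/
noncomputable def evNorm {n : ℕ} (x : Fin n → ℝ) : ℝ :=
  ‖(EuclideanSpace.equiv (Fin n) ℝ).symm x‖

/-- Uniform SOSC with constant `γ`. -/
def USOSC {nx nu : ℕ} (N : ℕ) (γ : ℝ)
    (A : ℕ → Matrix (Fin nx) (Fin nx) ℝ) (B : ℕ → Matrix (Fin nx) (Fin nu) ℝ)
    (Q : ℕ → Matrix (Fin nx) (Fin nx) ℝ) (R : ℕ → Matrix (Fin nu) (Fin nu) ℝ)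
    (S : ℕ → Matrix (Fin nu) (Fin nx) ℝ) : Prop :=
  ∀ (p : ℕ → Fin nx → ℝ) (q : ℕ → Fin nu → ℝ),
    p 0 = 0 → (∀ k < N, p (k + 1) = A k *ᵥ p k + B k *ᵥ q k) →
    γ * ((∑ k ∈ range (N + 1), evNorm (p k) ^ 2) + ∑ k ∈ range N, evNorm (q k) ^ 2)
      ≤ (∑ k ∈ range N,
          (p k ⬝ᵥ Q k *ᵥ p k + 2 * (q k ⬝ᵥ S k *ᵥ p k) + q k ⬝ᵥ R k *ᵥ q k))
        + p N ⬝ᵥ Q N *ᵥ p N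

section QuadraticForms

variable {α : Type*} [CommSemiring α] {m n o : Type*} [Fintype m]

lemma dotProduct_transpose_mul_mul_mulVec [Fintype n] [Fintype o] (M : Matrix o m α)
    (W : Matrix o o α) (N : Matrix o n α) (u : m → α) (v : n → α) :
    u ⬝ᵥ (Mᵀ * W * N) *ᵥ v = (M *ᵥ u) ⬝ᵥ W *ᵥ (N *ᵥ v) := by
  rw [Matrix.mul_assoc, ← mulVec_mulVec, dotProduct_mulVec, vecMul_transpose, ← mulVec_mulVec]

lemma Matrix.IsSymm.dotProduct_mulVec_comm {W : Matrix m m α} (hW : W.IsSymm) (u v : m → α) :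
    u ⬝ᵥ W *ᵥ v = v ⬝ᵥ W *ᵥ u := by
  rw [dotProduct_mulVec, ← vecMul_transpose, hW.eq, dotProduct_comm]

lemma Matrix.IsSymm.transpose_mul_mul {W : Matrix m m α} (hW : W.IsSymm) (M : Matrix m n α) :
    (Mᵀ * W * M).IsSymm := by
  rw [IsSymm, transpose_mul, transpose_mul, transpose_transpose, hW.eq, Matrix.mul_assoc]

end QuadraticForms

section PosSemidef

variable {m : Type*} [Fintype m] [DecidableEq m]

lemma posSemidef_sub_smul_one_iff {M : Matrix m m ℝ} {c : ℝ} :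
    (M - c • 1).PosSemidef ↔ M.IsSymm ∧ ∀ x, c * (x ⬝ᵥ x) ≤ x ⬝ᵥ M *ᵥ x := by
  have hsymm : (M - c • 1).IsSymm ↔ M.IsSymm :=
    ⟨fun h => by simpa using h.add ((isSymm_one (α := ℝ)).smul c),
      fun h => h.sub ((isSymm_one (α := ℝ)).smul c)⟩
  simp only [posSemidef_iff_dotProduct_mulVec, isHermitian_iff_isSymm, hsymm, star_trivial,
    sub_mulVec, smul_mulVec, one_mulVec, dotProduct_sub, dotProduct_smul, smul_eq_mul, sub_nonneg]

lemma isUnit_det_of_posSemidef_sub_smul_one {M : Matrix m m ℝ} {c : ℝ} (hc : 0 < c)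
    (h : (M - c • 1).PosSemidef) : IsUnit M.det := by
  have hM : M.PosDef := by simpa using PosDef.posSemidef_add h (PosDef.one.smul hc)
  exact (isUnit_iff_isUnit_det M).mp hM.isUnit

end PosSemidef

section StageCost

variable {m n : Type*} [Fintype m] [Fintype n]

def stageCost (Q : Matrix m m ℝ) (S : Matrix n m ℝ) (R : Matrix n n ℝ) (p : m → ℝ) (q : n → ℝ) :
    ℝ :=
  p ⬝ᵥ Q *ᵥ p + 2 * (q ⬝ᵥ S *ᵥ p) + q ⬝ᵥ R *ᵥ q

lemma dotProduct_self_sum (z : m ⊕ n → ℝ) :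
    z ⬝ᵥ z = (z ∘ Sum.inl) ⬝ᵥ (z ∘ Sum.inl) + (z ∘ Sum.inr) ⬝ᵥ (z ∘ Sum.inr) := by
  conv_lhs => rw [← Sum.elim_comp_inl_inr z]
  exact sumElim_dotProduct_sumElim _ _ _ _

lemma dotProduct_fromBlocks_mulVec_self (Q : Matrix m m ℝ) (S : Matrix n m ℝ) (R : Matrix n n ℝ)
    (z : m ⊕ n → ℝ) :
    z ⬝ᵥ fromBlocks Q Sᵀ S R *ᵥ z = stageCost Q S R (z ∘ Sum.inl) (z ∘ Sum.inr) := by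
  rw [← Sum.elim_comp_inl_inr z, fromBlocks_mulVec, sumElim_dotProduct_sumElim]
  simp only [Sum.elim_comp_inl, Sum.elim_comp_inr, stageCost, dotProduct_add,
    dotProduct_mulVec _ Sᵀ, vecMul_transpose, dotProduct_comm _ (S *ᵥ _)]
  ring

lemma stageCost_eq_sub_add (Q Qt A W : Matrix m m ℝ) (S : Matrix n m ℝ) (R : Matrix n n ℝ)
    (B : Matrix m n ℝ) (hW : W.IsSymm) (p : m → ℝ) (q : n → ℝ) :
    stageCost Q S R p q
      = p ⬝ᵥ (Q + Aᵀ * W * A - Qt) *ᵥ p - (A *ᵥ p + B *ᵥ q) ⬝ᵥ W *ᵥ (A *ᵥ p + B *ᵥ q)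
        + stageCost Qt (S + Bᵀ * W * A) (R + Bᵀ * W * B) p q := by
  simp only [stageCost, add_mulVec, sub_mulVec, mulVec_add, dotProduct_add, add_dotProduct,
    dotProduct_sub, dotProduct_transpose_mul_mul_mulVec, hW.dotProduct_mulVec_comm (A *ᵥ p)]
  ring

variable [DecidableEq m] [DecidableEq n]

lemma stageCost_schur_complement {R : Matrix n n ℝ} (hR : R.IsSymm) (hdet : IsUnit R.det)
    (S : Matrix n m ℝ) (δ : ℝ) (p : m → ℝ) (q : n → ℝ) :
    stageCost (Sᵀ * R⁻¹ * S + δ • 1) S R p q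
      = (q + R⁻¹ *ᵥ (S *ᵥ p)) ⬝ᵥ R *ᵥ (q + R⁻¹ *ᵥ (S *ᵥ p)) + δ * (p ⬝ᵥ p) := by
  have hRu : R *ᵥ (R⁻¹ *ᵥ (S *ᵥ p)) = S *ᵥ p := by
    rw [mulVec_mulVec, mul_nonsing_inv _ hdet, one_mulVec]
  simp only [stageCost, add_mulVec, mulVec_add, dotProduct_add, add_dotProduct,
    dotProduct_transpose_mul_mul_mulVec, smul_mulVec, one_mulVec, dotProduct_smul, smul_eq_mul,
    hRu, hR.dotProduct_mulVec_comm _ q, dotProduct_comm (S *ᵥ p)]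
  ring

end StageCost

section EuclideanNorm

variable {m n : ℕ}

lemma evNorm_nonneg (x : Fin n → ℝ) : 0 ≤ evNorm x := norm_nonneg _

lemma evNorm_sq (x : Fin n → ℝ) : evNorm x ^ 2 = x ⬝ᵥ x := by
  rw [evNorm, EuclideanSpace.norm_eq, Real.sq_sqrt (by positivity)]
  simp [dotProduct, sq]

lemma evNorm_sub_le (x y : Fin n → ℝ) : evNorm (x - y) ≤ evNorm x + evNorm y := by
  simpa only [evNorm, map_sub] using norm_sub_le _ _

lemma dotProduct_le_evNorm_mul (x y : Fin n → ℝ) : x ⬝ᵥ y ≤ evNorm x * evNorm y := by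
  have h : x ⬝ᵥ y = inner ℝ ((EuclideanSpace.equiv (Fin n) ℝ).symm x)
      ((EuclideanSpace.equiv (Fin n) ℝ).symm y) := by
    simp [PiLp.inner_apply, dotProduct, mul_comm]
  exact h ▸ real_inner_le_norm _ _

lemma evNorm_mulVec_le (M : Matrix (Fin m) (Fin n) ℝ) (x : Fin n → ℝ) :
    evNorm (M *ᵥ x) ≤ opNorm M * evNorm x :=
  (LinearMap.toContinuousLinearMap (toEuclideanLin M)).le_opNorm _

lemma mul_evNorm_inv_mulVec_le {R : Matrix (Fin n) (Fin n) ℝ} {γ : ℝ} (hγ : 0 < γ)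
    (hR : (R - γ • 1).PosSemidef) (v : Fin n → ℝ) : γ * evNorm (R⁻¹ *ᵥ v) ≤ evNorm v := by
  set u := R⁻¹ *ᵥ v
  have hRu : R *ᵥ u = v := by
    rw [mulVec_mulVec, mul_nonsing_inv _ (isUnit_det_of_posSemidef_sub_smul_one hγ hR),
      one_mulVec]
  have h : evNorm u * (γ * evNorm u) ≤ evNorm u * evNorm v :=
    calc evNorm u * (γ * evNorm u) = γ * (u ⬝ᵥ u) := by rw [← evNorm_sq]; ring
      _ ≤ u ⬝ᵥ R *ᵥ u := (posSemidef_sub_smul_one_iff.mp hR).2 u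
      _ ≤ evNorm u * evNorm v := hRu ▸ dotProduct_le_evNorm_mul u v
  rcases (evNorm_nonneg u).eq_or_lt with hu | hu
  · rw [← hu, mul_zero]; exact evNorm_nonneg v
  · exact le_of_mul_le_mul_left h hu

end EuclideanNorm

lemma sq_div_add_mul_sum_sq_le {γ δ Υ a b c : ℝ} (hγ : 0 < γ) (hδ : 0 ≤ δ) (hδγ : δ ≤ γ)
    (hΥ : 0 ≤ Υ) (hb : 0 ≤ b) (hbc : γ * b ≤ γ * c + Υ * a) :
    (γ / (γ + Υ)) ^ 2 * δ * (a ^ 2 + b ^ 2) ≤ γ * c ^ 2 + δ * a ^ 2 := by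
  have hγΥ : 0 < γ + Υ := add_pos_of_pos_of_nonneg hγ hΥ
  set t := γ / (γ + Υ) with ht
  have ht0 : 0 ≤ t := by positivity
  have ht1 : t ≤ 1 := div_le_one_of_le₀ (le_add_of_nonneg_right hΥ) hγΥ.le
  -- divided by `γ + Υ`, the hypothesis bounds `t b` by a convex combination of `c` and `a`
  have hconv : t * b ≤ t * c + (1 - t) * a := by
    have h1t : 1 - t = Υ / (γ + Υ) := by rw [ht]; field_simp; ring
    rw [h1t, ht, div_mul_eq_mul_div, div_mul_eq_mul_div, div_mul_eq_mul_div, ← add_div]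
    gcongr
  have hsq : (t * b) ^ 2 ≤ t * c ^ 2 + (1 - t) * a ^ 2 :=
    calc (t * b) ^ 2 ≤ (t * c + (1 - t) * a) ^ 2 := pow_le_pow_left₀ (by positivity) hconv 2
      _ ≤ t * c ^ 2 + (1 - t) * a ^ 2 := by
        nlinarith [mul_nonneg (mul_nonneg ht0 (sub_nonneg.2 ht1)) (sq_nonneg (c - a))]
  have hδsq := mul_le_mul_of_nonneg_left hsq hδ
  have hta : t ^ 2 * (δ * a ^ 2) ≤ t * (δ * a ^ 2) :=
    mul_le_mul_of_nonneg_right (pow_le_of_le_one ht0 ht1 two_ne_zero) (by positivity)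
  have htc : δ * t * c ^ 2 ≤ γ * c ^ 2 :=
    mul_le_mul_of_nonneg_right ((mul_le_of_le_one_right hδ ht1).trans hδγ) (sq_nonneg c)
  linarith

lemma posSemidef_fromBlocks_schur_sub_smul_one {nx nu : ℕ} {R : Matrix (Fin nu) (Fin nu) ℝ}
    {S : Matrix (Fin nu) (Fin nx) ℝ} {γ δ Υ : ℝ} (hγ : 0 < γ) (hδ : 0 ≤ δ) (hδγ : δ ≤ γ)
    (hR : (R - γ • 1).PosSemidef) (hS : opNorm S ≤ Υ) :
    (fromBlocks (Sᵀ * R⁻¹ * S + δ • 1) Sᵀ S R - ((γ / (γ + Υ)) ^ 2 * δ) • 1).PosSemidef := by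
  obtain ⟨hRsymm, hRγ⟩ := posSemidef_sub_smul_one_iff.mp hR
  have hΥ : 0 ≤ Υ := (norm_nonneg _).trans hS
  refine posSemidef_sub_smul_one_iff.mpr ⟨?_, fun z => ?_⟩
  · exact (((hRsymm.inv).transpose_mul_mul S).add (isSymm_one.smul δ)).fromBlocks rfl hRsymm
  set x := z ∘ Sum.inl
  set u := R⁻¹ *ᵥ (S *ᵥ x)
  set w := z ∘ Sum.inr + u
  have hu : γ * evNorm u ≤ Υ * evNorm x :=
    (mul_evNorm_inv_mulVec_le hγ hR _).trans
      ((evNorm_mulVec_le S x).trans (mul_le_mul_of_nonneg_right hS (evNorm_nonneg x)))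
  have hy : evNorm (z ∘ Sum.inr) ≤ evNorm w + evNorm u := by
    simpa [w] using evNorm_sub_le w u
  have hbound := sq_div_add_mul_sum_sq_le hγ hδ hδγ hΥ (evNorm_nonneg _)
    (show γ * evNorm (z ∘ Sum.inr) ≤ γ * evNorm w + Υ * evNorm x by nlinarith)
  rw [evNorm_sq, evNorm_sq, evNorm_sq, ← dotProduct_self_sum] at hbound
  rw [dotProduct_fromBlocks_mulVec_self, stageCost_schur_complement hRsymm
    (isUnit_det_of_posSemidef_sub_smul_one hγ hR)]
  linarith [hRγ w]

section Convexification

variable {m n : Type*} [Fintype m] [Fintype n] [DecidableEq n]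

noncomputable def closedLoopState (A : ℕ → Matrix m m ℝ) (B : ℕ → Matrix m n ℝ)
    (K : ℕ → (m → ℝ) → n → ℝ) : ℕ → m → ℝ
  | 0 => 0
  | j + 1 => A j *ᵥ closedLoopState A B K j + B j *ᵥ K j (closedLoopState A B K j)

/-- The control `q₀` at time `k`, and at every other time the feedback that makes the square in
`stageCost_schur_complement` vanish. -/
noncomputable def impulseFeedback (Rt : ℕ → Matrix n n ℝ) (St : ℕ → Matrix n m ℝ) (k : ℕ)
    (q₀ : n → ℝ) (j : ℕ) (x : m → ℝ) : n → ℝ :=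
  if j = k then q₀ else -((Rt j)⁻¹ *ᵥ (St j *ᵥ x))

lemma closedLoopState_impulseFeedback_of_le (A : ℕ → Matrix m m ℝ) (B : ℕ → Matrix m n ℝ)
    (Rt : ℕ → Matrix n n ℝ) (St : ℕ → Matrix n m ℝ) {k j : ℕ} (q₀ : n → ℝ) (hj : j ≤ k) :
    closedLoopState A B (impulseFeedback Rt St k q₀) j = 0 := by
  induction j with
  | zero => rfl
  | succ j ih =>
    rw [closedLoopState, ih (by omega), impulseFeedback, if_neg (by omega)]
    simp

variable [DecidableEq m]

structure IsConvexification (N : ℕ) (δ : ℝ) (A : ℕ → Matrix m m ℝ) (B : ℕ → Matrix m n ℝ)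
    (Q : ℕ → Matrix m m ℝ) (R : ℕ → Matrix n n ℝ) (S : ℕ → Matrix n m ℝ)
    (Qbar : ℕ → Matrix m m ℝ) (Rt : ℕ → Matrix n n ℝ) (St : ℕ → Matrix n m ℝ)
    (Qt : ℕ → Matrix m m ℝ) : Prop where
  Qbar_last : Qbar N = Q N - δ • 1
  Rt_eq : ∀ k < N, Rt k = R k + (B k)ᵀ * Qbar (k + 1) * B k
  St_eq : ∀ k < N, St k = S k + (B k)ᵀ * Qbar (k + 1) * A k
  Qt_eq : ∀ k < N, Qt k = (St k)ᵀ * (Rt k)⁻¹ * St k + δ • 1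
  Qbar_eq : ∀ k < N, Qbar k = Q k + (A k)ᵀ * Qbar (k + 1) * A k - Qt k

namespace IsConvexification

variable {N : ℕ} {δ : ℝ} {A : ℕ → Matrix m m ℝ} {B : ℕ → Matrix m n ℝ} {Q : ℕ → Matrix m m ℝ}
  {R : ℕ → Matrix n n ℝ} {S : ℕ → Matrix n m ℝ} {Qbar : ℕ → Matrix m m ℝ}
  {Rt : ℕ → Matrix n n ℝ} {St : ℕ → Matrix n m ℝ} {Qt : ℕ → Matrix m m ℝ}
  (hc : IsConvexification N δ A B Q R S Qbar Rt St Qt)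

include hc

lemma isSymm_Rt_of {k : ℕ} (hk : k < N) (hR : (R k).IsSymm) (hQbar : (Qbar (k + 1)).IsSymm) :
    (Rt k).IsSymm :=
  hc.Rt_eq k hk ▸ hR.add (hQbar.transpose_mul_mul (B k))

lemma isSymm_Qt_of {k : ℕ} (hk : k < N) (hRt : (Rt k).IsSymm) : (Qt k).IsSymm :=
  hc.Qt_eq k hk ▸ (hRt.inv.transpose_mul_mul (St k)).add (isSymm_one.smul δ)

lemma isSymm_Qbar (hQ : ∀ k ≤ N, (Q k).IsSymm) (hR : ∀ k < N, (R k).IsSymm) :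
    ∀ k ≤ N, (Qbar k).IsSymm := by
  intro k hk
  induction hk using Nat.decreasingInduction with
  | self => exact hc.Qbar_last ▸ (hQ N le_rfl).sub (isSymm_one.smul δ)
  | of_succ k hk ih =>
    have hQt := hc.isSymm_Qt_of hk (hc.isSymm_Rt_of hk (hR k hk) ih)
    exact hc.Qbar_eq k hk ▸ ((hQ k hk.le).add (ih.transpose_mul_mul (A k))).sub hQt

lemma sum_stageCost_add_terminal_eq (hQbar : ∀ k ≤ N, (Qbar k).IsSymm) (p : ℕ → m → ℝ)
    (q : ℕ → n → ℝ) (hp : ∀ k < N, p (k + 1) = A k *ᵥ p k + B k *ᵥ q k) :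
    ∑ k ∈ range N, stageCost (Q k) (S k) (R k) (p k) (q k) + p N ⬝ᵥ Q N *ᵥ p N
      = p 0 ⬝ᵥ Qbar 0 *ᵥ p 0 + ∑ k ∈ range N, stageCost (Qt k) (St k) (Rt k) (p k) (q k)
        + δ * (p N ⬝ᵥ p N) := by
  have hstage : ∀ k ∈ range N, stageCost (Q k) (S k) (R k) (p k) (q k)
      = (p k ⬝ᵥ Qbar k *ᵥ p k - p (k + 1) ⬝ᵥ Qbar (k + 1) *ᵥ p (k + 1))
        + stageCost (Qt k) (St k) (Rt k) (p k) (q k) := by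
    intro k hk
    have hk := mem_range.mp hk
    rw [stageCost_eq_sub_add _ (Qt k) (A k) _ _ _ (B k) (hQbar (k + 1) hk), hc.Qbar_eq k hk,
      hc.St_eq k hk, hc.Rt_eq k hk, hp k hk]
  have hlast : p N ⬝ᵥ Q N *ᵥ p N = p N ⬝ᵥ Qbar N *ᵥ p N + δ * (p N ⬝ᵥ p N) := by
    simp only [hc.Qbar_last, sub_mulVec, smul_mulVec, one_mulVec, dotProduct_sub,
      dotProduct_smul, smul_eq_mul, sub_add_cancel]
  rw [sum_congr rfl hstage, sum_add_distrib, sum_range_sub', hlast]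
  ring

lemma stageCost_impulseFeedback {γ : ℝ} (hγ : 0 < γ) {k : ℕ} (q₀ : n → ℝ)
    (hlater : ∀ j, k < j → j < N → (Rt j - γ • 1).PosSemidef) {j : ℕ} (hj : j < N) :
    stageCost (Qt j) (St j) (Rt j) (closedLoopState A B (impulseFeedback Rt St k q₀) j)
        (impulseFeedback Rt St k q₀ j (closedLoopState A B (impulseFeedback Rt St k q₀) j))
      = (if j = k then q₀ ⬝ᵥ Rt k *ᵥ q₀ else 0)
        + δ * (closedLoopState A B (impulseFeedback Rt St k q₀) j
          ⬝ᵥ closedLoopState A B (impulseFeedback Rt St k q₀) j) := by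
  rcases le_or_gt j k with hjk | hjk
  · rw [closedLoopState_impulseFeedback_of_le A B Rt St q₀ hjk, impulseFeedback]
    split_ifs with h
    · subst h; simp [stageCost]
    · simp [stageCost]
  · have hR := hlater j hjk hj
    rw [hc.Qt_eq j hj, stageCost_schur_complement (posSemidef_sub_smul_one_iff.mp hR).1
      (isUnit_det_of_posSemidef_sub_smul_one hγ hR), impulseFeedback, if_neg hjk.ne',
      neg_add_cancel, if_neg hjk.ne']
    simp

end IsConvexification

end Convexification

namespace IsConvexification

variable {nx nu N : ℕ} {δ γ : ℝ} {A : ℕ → Matrix (Fin nx) (Fin nx) ℝ}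
  {B : ℕ → Matrix (Fin nx) (Fin nu) ℝ} {Q : ℕ → Matrix (Fin nx) (Fin nx) ℝ}
  {R : ℕ → Matrix (Fin nu) (Fin nu) ℝ} {S : ℕ → Matrix (Fin nu) (Fin nx) ℝ}
  {Qbar : ℕ → Matrix (Fin nx) (Fin nx) ℝ} {Rt : ℕ → Matrix (Fin nu) (Fin nu) ℝ}
  {St : ℕ → Matrix (Fin nu) (Fin nx) ℝ} {Qt : ℕ → Matrix (Fin nx) (Fin nx) ℝ}
  (hc : IsConvexification N δ A B Q R S Qbar Rt St Qt)
include hc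

lemma posSemidef_Rt_sub_of_forall_gt (hQbar : ∀ k ≤ N, (Qbar k).IsSymm)
    (hRt : ∀ k < N, (Rt k).IsSymm) (husosc : USOSC N γ A B Q R S) (hγ : 0 < γ) (hδγ : δ ≤ γ)
    {k : ℕ} (hk : k < N) (hlater : ∀ j, k < j → j < N → (Rt j - γ • 1).PosSemidef) :
    (Rt k - γ • 1).PosSemidef := by
  refine posSemidef_sub_smul_one_iff.mpr ⟨hRt k hk, fun q₀ => ?_⟩
  have hcost := hc.sum_stageCost_add_terminal_eq hQbar
    (closedLoopState A B (impulseFeedback Rt St k q₀))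
    (fun j => impulseFeedback Rt St k q₀ j (closedLoopState A B (impulseFeedback Rt St k q₀) j))
    fun j _ => rfl
  rw [sum_congr rfl fun j hj => hc.stageCost_impulseFeedback hγ q₀ hlater (mem_range.mp hj),
    sum_add_distrib, sum_ite_eq', if_pos (mem_range.mpr hk), ← mul_sum] at hcost
  set p := closedLoopState A B (impulseFeedback Rt St k q₀)
  set q := fun j => impulseFeedback Rt St k q₀ j (p j)
  have hsosc : γ * (∑ j ∈ range (N + 1), p j ⬝ᵥ p j + ∑ j ∈ range N, q j ⬝ᵥ q j)
      ≤ ∑ j ∈ range N, stageCost (Q j) (S j) (R j) (p j) (q j) + p N ⬝ᵥ Q N *ᵥ p N := by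
    have h := husosc p q rfl fun j _ => rfl
    simp only [evNorm_sq] at h
    exact h
  have hq : q₀ ⬝ᵥ q₀ ≤ ∑ j ∈ range N, q j ⬝ᵥ q j := by
    have hqk : q k = q₀ := if_pos rfl
    exact hqk ▸ single_le_sum (f := fun j => q j ⬝ᵥ q j)
      (fun j _ => evNorm_sq (q j) ▸ sq_nonneg _) (mem_range.mpr hk)
  have hP : 0 ≤ ∑ j ∈ range (N + 1), p j ⬝ᵥ p j :=
    sum_nonneg fun j _ => evNorm_sq (p j) ▸ sq_nonneg _
  rw [show p 0 = 0 from rfl, zero_dotProduct] at hcost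
  rw [sum_range_succ] at hsosc hP
  linarith [mul_le_mul_of_nonneg_left hq hγ.le, mul_le_mul_of_nonneg_right hδγ hP]

lemma posSemidef_Rt_sub (hQbar : ∀ k ≤ N, (Qbar k).IsSymm) (hRt : ∀ k < N, (Rt k).IsSymm)
    (husosc : USOSC N γ A B Q R S) (hγ : 0 < γ) (hδγ : δ ≤ γ) :
    ∀ k < N, (Rt k - γ • 1).PosSemidef := by
  suffices h : ∀ k ≤ N, ∀ j, k ≤ j → j < N → (Rt j - γ • 1).PosSemidef from
    fun k hk => h k hk.le k le_rfl hk
  intro k hk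
  induction hk using Nat.decreasingInduction with
  | self => exact fun j hj hjN => absurd hjN (not_lt.mpr hj)
  | of_succ k hk ih =>
    intro j hj hjN
    rcases hj.eq_or_lt with rfl | hj
    · exact hc.posSemidef_Rt_sub_of_forall_gt hQbar hRt husosc hγ hδγ hk fun i hi => ih i hi
    · exact ih j hj hjN

end IsConvexification

theorem convexification_lower_bound_preserving_general
    (N nx nu : ℕ)
    (γ δ Υt : ℝ) (hγ : 0 < γ) (hδ0 : 0 < δ) (hδγ : δ < γ) (hΥt : 0 < Υt)
    (A : ℕ → Matrix (Fin nx) (Fin nx) ℝ) (B : ℕ → Matrix (Fin nx) (Fin nu) ℝ)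
    (Q : ℕ → Matrix (Fin nx) (Fin nx) ℝ) (R : ℕ → Matrix (Fin nu) (Fin nu) ℝ)
    (S : ℕ → Matrix (Fin nu) (Fin nx) ℝ)
    (hQsymm : ∀ k ≤ N, (Q k).IsSymm) (hRsymm : ∀ k < N, (R k).IsSymm)
    (husosc : USOSC N γ A B Q R S)
    (Qbar : ℕ → Matrix (Fin nx) (Fin nx) ℝ) (Rt : ℕ → Matrix (Fin nu) (Fin nu) ℝ)
    (St : ℕ → Matrix (Fin nu) (Fin nx) ℝ) (Qt : ℕ → Matrix (Fin nx) (Fin nx) ℝ)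
    (Ht : ℕ → Matrix (Fin nx ⊕ Fin nu) (Fin nx ⊕ Fin nu) ℝ)
    (hQbarN : Qbar N = Q N - δ • (1 : Matrix (Fin nx) (Fin nx) ℝ))
    (hRt : ∀ k < N, Rt k = R k + (B k)ᵀ * Qbar (k + 1) * B k)
    (hSt : ∀ k < N, St k = S k + (B k)ᵀ * Qbar (k + 1) * A k)
    (hQt : ∀ k < N, Qt k = (St k)ᵀ * (Rt k)⁻¹ * St k
      + δ • (1 : Matrix (Fin nx) (Fin nx) ℝ))
    (hQbar : ∀ k < N, Qbar k = Q k + (A k)ᵀ * Qbar (k + 1) * A k - Qt k)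
    (hHt : ∀ k < N, Ht k = Matrix.fromBlocks (Qt k) (St k)ᵀ (St k) (Rt k))
    (hHtN : Ht N = δ • (1 : Matrix (Fin nx ⊕ Fin nu) (Fin nx ⊕ Fin nu) ℝ))
    (hStbnd : ∀ k < N, opNorm (St k) ≤ Υt)
    (lamH : ℝ) (hlamH : lamH = (γ / (γ + Υt)) ^ 2 * δ) :
    0 < lamH ∧
    ∀ k ≤ N, (Ht k
      - lamH • (1 : Matrix (Fin nx ⊕ Fin nu) (Fin nx ⊕ Fin nu) ℝ)).PosSemidef := by
  have hc : IsConvexification N δ A B Q R S Qbar Rt St Qt := ⟨hQbarN, hRt, hSt, hQt, hQbar⟩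
  have hQbarSymm := hc.isSymm_Qbar hQsymm hRsymm
  have hRtSymm : ∀ k < N, (Rt k).IsSymm := fun k hk =>
    hc.isSymm_Rt_of hk (hRsymm k hk) (hQbarSymm (k + 1) hk)
  have hRtPos := hc.posSemidef_Rt_sub hQbarSymm hRtSymm husosc hγ hδγ.le
  have hγΥ : 0 < γ + Υt := add_pos hγ hΥt
  refine ⟨hlamH ▸ by positivity, fun k hk => ?_⟩
  rcases hk.lt_or_eq with hk | rfl
  · rw [hHt k hk, hQt k hk, hlamH]
    exact posSemidef_fromBlocks_schur_sub_smul_one hγ hδ0.le hδγ.le (hRtPos k hk) (hStbnd k hk)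
  · have hlam : lamH ≤ δ := hlamH ▸ mul_le_of_le_one_left hδ0.le
      (pow_le_one₀ (by positivity) (div_le_one_of_le₀ (le_add_of_nonneg_right hΥt.le) hγΥ.le))
    rw [hHtN, ← sub_smul]
    exact PosSemidef.one.smul (sub_nonneg.mpr hlam)

/-- **Lower-bound-preserving property of the convexification (Theorem 5.7).**
Under uniform SOSC with constant `γ > 0`, for `δ ∈ (0, γ)` and any `Υ̃ > 0` bounding
`‖S̃_k(δ)‖`, one has `H̃_k(δ) ⪰ λ_H I` for all `k ≤ N`, where
`λ_H = (γ/(γ+Υ̃))²·δ > 0`. -/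
theorem convexification_lower_bound_preserving
    (N nx nu : ℕ) (hN : 1 ≤ N) (hnx : 1 ≤ nx) (hnu : 1 ≤ nu)
    (γ δ Υt : ℝ) (hγ : 0 < γ) (hδ0 : 0 < δ) (hδγ : δ < γ) (hΥt : 0 < Υt)
    (A : ℕ → Matrix (Fin nx) (Fin nx) ℝ) (B : ℕ → Matrix (Fin nx) (Fin nu) ℝ)
    (Q : ℕ → Matrix (Fin nx) (Fin nx) ℝ) (R : ℕ → Matrix (Fin nu) (Fin nu) ℝ)
    (S : ℕ → Matrix (Fin nu) (Fin nx) ℝ)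
    (hQsymm : ∀ k ≤ N, (Q k).IsSymm) (hRsymm : ∀ k < N, (R k).IsSymm)
    (husosc : USOSC N γ A B Q R S)
    (Qbar : ℕ → Matrix (Fin nx) (Fin nx) ℝ) (Rt : ℕ → Matrix (Fin nu) (Fin nu) ℝ)
    (St : ℕ → Matrix (Fin nu) (Fin nx) ℝ) (Qt : ℕ → Matrix (Fin nx) (Fin nx) ℝ)
    (Ht : ℕ → Matrix (Fin nx ⊕ Fin nu) (Fin nx ⊕ Fin nu) ℝ)
    (hQbarN : Qbar N = Q N - δ • (1 : Matrix (Fin nx) (Fin nx) ℝ))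
    (hRt : ∀ k < N, Rt k = R k + (B k)ᵀ * Qbar (k + 1) * B k)
    (hSt : ∀ k < N, St k = S k + (B k)ᵀ * Qbar (k + 1) * A k)
    (hQt : ∀ k < N, Qt k = (St k)ᵀ * (Rt k)⁻¹ * St k
      + δ • (1 : Matrix (Fin nx) (Fin nx) ℝ))
    (hQbar : ∀ k < N, Qbar k = Q k + (A k)ᵀ * Qbar (k + 1) * A k - Qt k)
    (hHt : ∀ k < N, Ht k = Matrix.fromBlocks (Qt k) (St k)ᵀ (St k) (Rt k))
    (hHtN : Ht N = δ • (1 : Matrix (Fin nx ⊕ Fin nu) (Fin nx ⊕ Fin nu) ℝ))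
    (hStbnd : ∀ k < N, opNorm (St k) ≤ Υt)
    (lamH : ℝ) (hlamH : lamH = (γ / (γ + Υt)) ^ 2 * δ) :
    0 < lamH ∧
    ∀ k ≤ N, (Ht k
      - lamH • (1 : Matrix (Fin nx ⊕ Fin nu) (Fin nx ⊕ Fin nu) ℝ)).PosSemidef :=
  convexification_lower_bound_preserving_general N nx nu γ δ Υt hγ hδ0 hδγ hΥt A B Q R S hQsymm
    hRsymm husosc Qbar Rt St Qt Ht hQbarN hRt hSt hQt hQbar hHt hHtN hStbnd lamH hlamH
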